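/- Let G=(V,E) be an r-rank hypergraph, X' ⊆ V, and X'' := Shave(X') := {v ∈ X' : d_{X'}(v) > (1 − 1/r²)·d(v)}. Then the number of hyperedges contained in X' but not in X'' is at most r²(r−1)·|δ(X')|, and |δ(X'')| ≤ r³·|δ(X')|. -/
import Mathlib


open Finset

/-- Degree of a vertex: the number of hyperedges containing it. -/
def hypDeg {V : Type*} [Fintype V] [DecidableEq V]
    (E : Finset (Finset V)) (v : V) : ℕ :=
  (E.filter (fun e => v ∈ e)).card

/-- `d_X(v)`: the number of hyperedges containing `v` and contained in `X`. -/
def hypDegIn {V : Type*} [Fintype V] [DecidableEq V]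
    (E : Finset (Finset V)) (X : Finset V) (v : V) : ℕ :=
  (E.filter (fun e => v ∈ e ∧ e ⊆ X)).card

/-- `δ(S)`: the set of hyperedges intersecting both `S` and `V∖S`. -/
def cutEdges {V : Type*} [Fintype V] [DecidableEq V]
    (E : Finset (Finset V)) (S : Finset V) : Finset (Finset V) :=
  E.filter (fun e => (e ∩ S).Nonempty ∧ (e ∩ Sᶜ).Nonempty)

/-- `Shave(X') = {v ∈ X' : d_{X'}(v) > (1 − 1/r²)·d(v)}`
(stated equivalently as `r²·d_{X'}(v) > (r²−1)·d(v)`). -/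
def shave {V : Type*} [Fintype V] [DecidableEq V]
    (E : Finset (Finset V)) (r : ℕ) (X' : Finset V) : Finset V :=
  X'.filter (fun v => (r ^ 2 - 1) * hypDeg E v < r ^ 2 * hypDegIn E X' v)

/-- For `X'' = Shave(X')` in an `r`-rank hypergraph, the number of
hyperedges contained in `X'` but not in `X''` is at most `r²(r−1)·|δ(X')|`,
and `|δ(X'')| ≤ r³·|δ(X')|`. -/
theorem hyperedges_lost_to_shave
    {V : Type*} [Fintype V] [DecidableEq V]
    (E : Finset (Finset V)) (r : ℕ) (hr : 2 ≤ r)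
    (hrank : ∀ e ∈ E, e.card ≤ r)
    (X' : Finset V) :
    ((E.filter (fun e => e ⊆ X')) \ (E.filter (fun e => e ⊆ shave E r X'))).card ≤
        r ^ 2 * (r - 1) * (cutEdges E X').card ∧
      (cutEdges E (shave E r X')).card ≤ r ^ 3 * (cutEdges E X').card := by

  classical
  set X'' := shave E r X' with hX''def
  have hsub : X'' ⊆ X' := Finset.filter_subset _ _
  set T := cutEdges E X' with hT
  set S := X' \ X'' with hS
  set L := (E.filter (fun e => e ⊆ X')) \ (E.filter (fun e => e ⊆ X'')) with hL
  have hLsub : L ⊆ S.biUnion (fun v => E.filter (fun e => v ∈ e ∧ e ⊆ X')) := by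
    intro e he
    simp only [hL, Finset.mem_sdiff, Finset.mem_filter] at he
    obtain ⟨⟨heE, heX⟩, hne⟩ := he
    have hns : ¬ e ⊆ X'' := fun h => hne ⟨heE, h⟩
    obtain ⟨v, hv, hvn⟩ := Finset.not_subset.mp hns
    refine Finset.mem_biUnion.mpr ⟨v, ?_, ?_⟩
    · exact Finset.mem_sdiff.mpr ⟨heX hv, hvn⟩
    · exact Finset.mem_filter.mpr ⟨heE, hv, heX⟩
  have h1 : L.card ≤ ∑ v ∈ S, hypDegIn E X' v := by
    refine le_trans (Finset.card_le_card hLsub) (le_trans Finset.card_biUnion_le ?_)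
    simp [hypDegIn]
  have hkey : ∀ v ∈ S, hypDegIn E X' v ≤ r ^ 2 * (T.filter (fun e => v ∈ e)).card := by
    intro v hv
    obtain ⟨hvX, hvn⟩ := Finset.mem_sdiff.mp hv
    have hvn' : r ^ 2 * hypDegIn E X' v ≤ (r ^ 2 - 1) * hypDeg E v := by
      by_contra h
      exact hvn (by
        simp only [hX''def, shave, Finset.mem_filter]
        exact ⟨hvX, Nat.lt_of_not_le h⟩)
    have hsplit0 := Finset.card_filter_add_card_filter_not
      (s := E.filter (fun e => v ∈ e)) (p := fun e => e ⊆ X')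
    rw [Finset.filter_filter] at hsplit0
    have hne : (E.filter (fun e => v ∈ e)).filter (fun e => ¬ e ⊆ X')
        = T.filter (fun e => v ∈ e) := by
      rw [hT]
      simp only [cutEdges, Finset.filter_filter]
      apply Finset.filter_congr
      intro e heE
      constructor
      · rintro ⟨hve, hns⟩
        obtain ⟨u, hu, hun⟩ := Finset.not_subset.mp hns
        exact ⟨⟨⟨v, Finset.mem_inter.mpr ⟨hve, hvX⟩⟩,
          ⟨u, Finset.mem_inter.mpr ⟨hu, Finset.mem_compl.mpr hun⟩⟩⟩, hve⟩
      · rintro ⟨⟨-, ⟨u, hu⟩⟩, hve⟩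
        rw [Finset.mem_inter, Finset.mem_compl] at hu
        exact ⟨hve, fun h => hu.2 (h hu.1)⟩
    rw [hne] at hsplit0
    set dX := hypDegIn E X' v with hdX
    set c := (T.filter (fun e => v ∈ e)).card with hc
    set d := hypDeg E v with hd
    have hr2 : 1 ≤ r ^ 2 := Nat.one_le_pow _ _ (by omega)
    obtain ⟨m, hm⟩ := Nat.exists_eq_add_of_le hr2
    have hsplit : dX + c = d := by
      rw [hdX, hc, hd, hypDegIn, hypDeg]
      exact hsplit0
    rw [hm] at hvn' ⊢
    have hm1 : 1 + m - 1 = m := by omega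
    rw [hm1] at hvn'
    nlinarith [hsplit, hvn']
  have hswap : ∑ v ∈ S, (T.filter (fun e => v ∈ e)).card
      = ∑ e ∈ T, (S.filter (fun v => v ∈ e)).card := by
    simp only [Finset.card_filter]
    exact Finset.sum_comm
  have hedge : ∀ e ∈ T, (S.filter (fun v => v ∈ e)).card ≤ r - 1 := by
    intro e heT
    have heT' := heT
    rw [hT] at heT'
    simp only [cutEdges, Finset.mem_filter] at heT'
    obtain ⟨heE, -, hout⟩ := heT'
    obtain ⟨u, hu⟩ := hout
    rw [Finset.mem_inter, Finset.mem_compl] at hu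
    have hsub2 : S.filter (fun v => v ∈ e) ⊆ e.erase u := by
      intro w hw
      simp only [Finset.mem_filter, hS, Finset.mem_sdiff] at hw
      exact Finset.mem_erase.mpr ⟨fun h => hu.2 (h ▸ hw.1.1), hw.2⟩
    calc (S.filter (fun v => v ∈ e)).card ≤ (e.erase u).card := Finset.card_le_card hsub2
      _ = e.card - 1 := Finset.card_erase_of_mem hu.1
      _ ≤ r - 1 := Nat.sub_le_sub_right (hrank e heE) 1
  have part1 : L.card ≤ r ^ 2 * (r - 1) * T.card := by
    calc L.card ≤ ∑ v ∈ S, hypDegIn E X' v := h1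
      _ ≤ ∑ v ∈ S, r ^ 2 * (T.filter (fun e => v ∈ e)).card := Finset.sum_le_sum hkey
      _ = r ^ 2 * ∑ v ∈ S, (T.filter (fun e => v ∈ e)).card := (Finset.mul_sum _ _ _).symm
      _ = r ^ 2 * ∑ e ∈ T, (S.filter (fun v => v ∈ e)).card := by rw [hswap]
      _ ≤ r ^ 2 * (T.card * (r - 1)) := by
          have hs := Finset.sum_le_card_nsmul T _ (r - 1) hedge
          simp only [smul_eq_mul] at hs
          exact Nat.mul_le_mul_left _ hs
      _ = r ^ 2 * (r - 1) * T.card := by ring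
  refine ⟨part1, ?_⟩
  have hδsub : cutEdges E X'' ⊆ T ∪ L := by
    intro e he
    simp only [cutEdges, Finset.mem_filter] at he
    obtain ⟨heE, hin, hout⟩ := he
    by_cases hx : e ⊆ X'
    · apply Finset.mem_union_right
      simp only [hL, Finset.mem_sdiff, Finset.mem_filter]
      refine ⟨⟨heE, hx⟩, ?_⟩
      rintro ⟨-, hsubX''⟩
      obtain ⟨u, hu⟩ := hout
      rw [Finset.mem_inter, Finset.mem_compl] at hu
      exact hu.2 (hsubX'' hu.1)
    · apply Finset.mem_union_left
      rw [hT]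
      simp only [cutEdges, Finset.mem_filter]
      obtain ⟨w, hw⟩ := hin
      rw [Finset.mem_inter] at hw
      refine ⟨heE, ⟨w, Finset.mem_inter.mpr ⟨hw.1, hsub hw.2⟩⟩, ?_⟩
      obtain ⟨u, hu, hun⟩ := Finset.not_subset.mp hx
      exact ⟨u, Finset.mem_inter.mpr ⟨hu, Finset.mem_compl.mpr hun⟩⟩
  have hfin : 1 + r ^ 2 * (r - 1) ≤ r ^ 3 := by
    obtain ⟨s, rfl⟩ := Nat.exists_eq_add_of_le hr
    have h2 : 2 + s - 1 = 1 + s := by omega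
    rw [h2]
    nlinarith [sq_nonneg s]
  calc (cutEdges E X'').card ≤ (T ∪ L).card := Finset.card_le_card hδsub
    _ ≤ T.card + L.card := Finset.card_union_le _ _
    _ ≤ T.card + r ^ 2 * (r - 1) * T.card := by omega
    _ = (1 + r ^ 2 * (r - 1)) * T.card := by ring
    _ ≤ r ^ 3 * T.card := Nat.mul_le_mul_right _ hfin
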